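/- Let E be a finite set of equations, Φ a set of faults, φ : E → Set Φ, F(M) = ⋃_{e∈M} φ(e), and 𝒯 a family of subsets of E containing ∅ and closed under arbitrary unions; for N ⊆ E let N* = ⋃{T ∈ 𝒯 : T ⊆ N}. Let M₀ ⊆ E and let M' be an RG set with M' ⊆ M₀. Then there exist k ∈ ℕ and a finite sequence N₀, N₁, …, N_k of subsets of E such that N₀ = M₀*, N_k = M', and for each i < k there exist e_i ∈ N_i and f_i ∈ φ(e_i) with f_i ∈ F(N_i) \ F(M') and N_{i+1} = (N_i \ {e_i})*; moreover M' ⊆ N_{i+1} ⊊ N_i for each i < k. -/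

import Mathlib

open Set

/-- The fault signature map: faults appearing in a set of equations. -/
def faultsOf {E Φ : Type*} (φ : E → Set Φ) (M : Set E) : Set Φ := ⋃ e ∈ M, φ e

/-- The operator `N*`: the largest member of 𝒯 contained in `N`, realized as the
union of all members of 𝒯 contained in `N`. -/
def star {E : Type*} (𝒯 : Set (Set E)) (N : Set E) : Set E :=
  ⋃₀ {T | T ∈ 𝒯 ∧ T ⊆ N}

/-- An RG set: a testable set with nonempty fault signature that contains every
testable set with the same fault signature. -/
def IsRGSet {E Φ : Type*} (φ : E → Set Φ) (𝒯 : Set (Set E)) (M : Set E) : Prop :=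
  M ∈ 𝒯 ∧ (faultsOf φ M).Nonempty ∧
    ∀ M'' ∈ 𝒯, faultsOf φ M'' = faultsOf φ M → M'' ⊆ M

/-! If a testable `N` strictly contains the RG set `M'`, then `F(N) ≠ F(M')` by the maximality
of `M'`, so some `e ∈ N \ M'` carries a fault outside `F(M')`. Removing `e` and taking the star
keeps `M'` (which is testable) and strictly shrinks `N`; as `E` is finite, repeating this
from `M₀*` must end at `M'`. -/

open Relation

theorem Relation.ReflTransGen.exists_seq {α : Type*} {r : α → α → Prop} {a b : α}
    (h : ReflTransGen r a b) :
    ∃ (k : ℕ) (N : ℕ → α), N 0 = a ∧ N k = b ∧ ∀ i < k, r (N i) (N (i + 1)) := by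
  induction h using ReflTransGen.head_induction_on with
  | refl => exact ⟨0, fun _ => b, rfl, rfl, by simp⟩
  | head hac _ ih =>
    obtain ⟨k, N, h0, hk, hstep⟩ := ih
    refine ⟨k + 1, fun | 0 => _ | i + 1 => N i, rfl, hk, ?_⟩
    rintro (_ | i) hi
    · simpa [h0] using hac
    · exact hstep i (by omega)

section

variable {E Φ : Type*} (φ : E → Set Φ) (𝒯 : Set (Set E))

theorem mem_faultsOf {M : Set E} {f : Φ} : f ∈ faultsOf φ M ↔ ∃ e ∈ M, f ∈ φ e := by
  simp [faultsOf]

theorem faultsOf_mono {M N : Set E} (h : M ⊆ N) : faultsOf φ M ⊆ faultsOf φ N :=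
  biUnion_subset_biUnion_left h

theorem star_subset (N : Set E) : star 𝒯 N ⊆ N :=
  sUnion_subset fun _ hT => hT.2

theorem subset_star {T N : Set E} (hT : T ∈ 𝒯) (hTN : T ⊆ N) : T ⊆ star 𝒯 N :=
  subset_sUnion_of_mem ⟨hT, hTN⟩

theorem star_mem (hclosed : ∀ 𝒞 ⊆ 𝒯, ⋃₀ 𝒞 ∈ 𝒯) (N : Set E) : star 𝒯 N ∈ 𝒯 :=
  hclosed _ fun _ hT => hT.1

theorem IsRGSet.subset_of_faultsOf_subset {M' N : Set E} (hM' : IsRGSet φ 𝒯 M') (hN : N ∈ 𝒯)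
    (hMN : M' ⊆ N) (hF : faultsOf φ N ⊆ faultsOf φ M') : N ⊆ M' :=
  hM'.2.2 N hN (hF.antisymm (faultsOf_mono φ hMN))

def IsReductionStep (M' N N' : Set E) : Prop :=
  (∃ e ∈ N, ∃ f ∈ φ e, f ∈ faultsOf φ N \ faultsOf φ M' ∧ N' = star 𝒯 (N \ {e})) ∧
    M' ⊆ N' ∧ N' ⊂ N

theorem IsRGSet.exists_isReductionStep (hclosed : ∀ 𝒞 ⊆ 𝒯, ⋃₀ 𝒞 ∈ 𝒯) {M' N : Set E}
    (hM' : IsRGSet φ 𝒯 M') (hN : N ∈ 𝒯) (hMN : M' ⊆ N) (hne : N ≠ M') :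
    ∃ N' ∈ 𝒯, IsReductionStep φ 𝒯 M' N N' := by
  obtain ⟨f, hfN, hfM'⟩ : ∃ f ∈ faultsOf φ N, f ∉ faultsOf φ M' := by
    by_contra! hF
    exact hne ((hM'.subset_of_faultsOf_subset φ 𝒯 hN hMN hF).antisymm hMN)
  obtain ⟨e, heN, hfe⟩ := (mem_faultsOf φ).1 hfN
  have heM' : e ∉ M' := fun he => hfM' ((mem_faultsOf φ).2 ⟨e, he, hfe⟩)
  have hstar_sub : star 𝒯 (N \ {e}) ⊆ N \ {e} := star_subset 𝒯 _
  refine ⟨_, star_mem 𝒯 hclosed _, ⟨e, heN, f, hfe, ⟨hfN, hfM'⟩, rfl⟩,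
    subset_star 𝒯 hM'.1 (subset_sdiff_singleton hMN heM'), hstar_sub.trans sdiff_subset,
    fun hN_sub => (hstar_sub (hN_sub heN)).2 rfl⟩

theorem IsRGSet.reflTransGen_isReductionStep [Finite E] (hclosed : ∀ 𝒞 ⊆ 𝒯, ⋃₀ 𝒞 ∈ 𝒯)
    {M' N : Set E} (hM' : IsRGSet φ 𝒯 M') (hN : N ∈ 𝒯) (hMN : M' ⊆ N) :
    ReflTransGen (IsReductionStep φ 𝒯 M') N M' := by
  induction N using WellFoundedLT.induction with
  | _ N ih =>
    by_cases hne : N = M'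
    · exact hne ▸ ReflTransGen.refl
    obtain ⟨N', hN', hstep⟩ := hM'.exists_isReductionStep φ 𝒯 hclosed hN hMN hne
    exact ReflTransGen.head hstep (ih N' hstep.2.2 hN' hstep.2.1)

end

theorem stmt9_algorithm_reaches_every_RG_set_general
    {E Φ : Type*} [Finite E] (φ : E → Set Φ) (𝒯 : Set (Set E))
    (hclosed : ∀ 𝒞 ⊆ 𝒯, ⋃₀ 𝒞 ∈ 𝒯)
    (M₀ : Set E) (M' : Set E) (hM' : IsRGSet φ 𝒯 M') (hsub : M' ⊆ M₀) :
    ∃ (k : ℕ) (N : ℕ → Set E),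
      N 0 = star 𝒯 M₀ ∧ N k = M' ∧
      (∀ i < k, ∃ e ∈ N i, ∃ f ∈ φ e,
        f ∈ faultsOf φ (N i) \ faultsOf φ M' ∧
        N (i + 1) = star 𝒯 (N i \ {e})) ∧
      (∀ i < k, M' ⊆ N (i + 1) ∧ N (i + 1) ⊂ N i) := by
  obtain ⟨k, N, h0, hk, hstep⟩ := (hM'.reflTransGen_isReductionStep φ 𝒯 hclosed
    (star_mem 𝒯 hclosed M₀) (subset_star 𝒯 hM'.1 hsub)).exists_seq
  exact ⟨k, N, h0, hk, fun i hi => (hstep i hi).1, fun i hi => (hstep i hi).2⟩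

/-- (Correctness of the algorithm.) For `E` finite, 𝒯 containing ∅
and closed under arbitrary unions, `M₀ ⊆ E`, and an RG set `M' ⊆ M₀`, there is a
finite chain `N₀ = M₀*, N₁, …, N_k = M'` where each step removes an equation `eᵢ ∈ Nᵢ`
carrying a fault `fᵢ ∈ F(Nᵢ) \ F(M')` and takes the star, with
`M' ⊆ N_{i+1} ⊊ Nᵢ` at each step. -/
theorem stmt9_algorithm_reaches_every_RG_set
    {E Φ : Type*} [Finite E] (φ : E → Set Φ) (𝒯 : Set (Set E))
    (hempty : (∅ : Set E) ∈ 𝒯)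
    (hclosed : ∀ 𝒞 ⊆ 𝒯, ⋃₀ 𝒞 ∈ 𝒯)
    (M₀ : Set E) (M' : Set E) (hM' : IsRGSet φ 𝒯 M') (hsub : M' ⊆ M₀) :
    ∃ (k : ℕ) (N : ℕ → Set E),
      N 0 = star 𝒯 M₀ ∧ N k = M' ∧
      (∀ i < k, ∃ e ∈ N i, ∃ f ∈ φ e,
        f ∈ faultsOf φ (N i) \ faultsOf φ M' ∧
        N (i + 1) = star 𝒯 (N i \ {e})) ∧
      (∀ i < k, M' ⊆ N (i + 1) ∧ N (i + 1) ⊂ N i) :=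
  stmt9_algorithm_reaches_every_RG_set_general φ 𝒯 hclosed M₀ M' hM' hsub
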